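/- For a two-qubit density matrix ρ_AB with ordered eigenvalues λ₁ ≥ λ₂ ≥ λ₃ ≥ λ₄ and reduced states with minimal eigenvalues λ_A, λ_B, one has λ_A + λ_B ≥ λ₂ + λ₃ + 2λ₄. -/

import Mathlib

open Matrix ComplexOrder

/-- Classical relative entropy with convention `0 * log 0 = 0` (automatic since
`Real.log 0 = 0`). -/
noncomputable def relEnt {d : ℕ} (p q : Fin d → ℝ) : ℝ :=
  ∑ i, p i * (Real.log (p i) - Real.log (q i))

/-- Non-decreasing rearrangement `p↑`. -/
noncomputable def sortAsc {d : ℕ} (p : Fin d → ℝ) : Fin d → ℝ :=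
  p ∘ Tuple.sort p

/-- Non-increasing rearrangement `p↓`. -/
noncomputable def sortDesc {d : ℕ} (p : Fin d → ℝ) : Fin d → ℝ :=
  (p ∘ Tuple.sort p) ∘ Fin.rev
/-- Matrix logarithm of a Hermitian matrix via its spectral decomposition
(junk value `0` on non-Hermitian matrices). -/
noncomputable def matLog {n : Type*} [Fintype n] [DecidableEq n]
    (A : Matrix n n ℂ) : Matrix n n ℂ :=
  if h : A.IsHermitian then
    (h.eigenvectorUnitary : Matrix n n ℂ) *
      Matrix.diagonal (fun i => (Real.log (h.eigenvalues i) : ℂ)) *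
      (star h.eigenvectorUnitary : Matrix n n ℂ)
  else 0

/-- Eigenvalue vector of a Hermitian matrix (junk value `0` otherwise). -/
noncomputable def evals {n : Type*} [Fintype n] [DecidableEq n]
    (A : Matrix n n ℂ) : n → ℝ :=
  if h : A.IsHermitian then h.eigenvalues else 0

/-- Quantum relative entropy `S(ρ‖σ) = Tr (ρ (log ρ − log σ))`. -/
noncomputable def qRelEnt {n : Type*} [Fintype n] [DecidableEq n]
    (ρ σ : Matrix n n ℂ) : ℝ :=
  ((ρ * (matLog ρ - matLog σ)).trace).re

/-- von Neumann entropy `S(ρ) = −Tr (ρ log ρ)`. -/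
noncomputable def vnEnt {n : Type*} [Fintype n] [DecidableEq n]
    (ρ : Matrix n n ℂ) : ℝ :=
  -((ρ * matLog ρ).trace).re

/-- Partial trace over the second (B) factor. -/
noncomputable def ptraceB {a b : ℕ}
    (ρ : Matrix (Fin a × Fin b) (Fin a × Fin b) ℂ) : Matrix (Fin a) (Fin a) ℂ :=
  fun i j => ∑ k, ρ (i, k) (j, k)

/-- Partial trace over the first (A) factor. -/
noncomputable def ptraceA {a b : ℕ}
    (ρ : Matrix (Fin a × Fin b) (Fin a × Fin b) ℂ) : Matrix (Fin b) (Fin b) ℂ :=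
  fun i j => ∑ k, ρ (k, i) (k, j)

/-- Eigenvalues of a matrix on a bipartite space, reindexed by `Fin (a*b)`. -/
noncomputable def evalsP {a b : ℕ}
    (ρ : Matrix (Fin a × Fin b) (Fin a × Fin b) ℂ) : Fin (a * b) → ℝ :=
  evals ρ ∘ finProdFinEquiv.symm

/-!
Diagonalize `ρ_A` and `ρ_B` in orthonormal bases `(uₘ)`, `(wₙ)` and put
`qₘₙ = ⟨uₘ ⊗ wₙ| ρ |uₘ ⊗ wₙ⟩`. The eigenvalues of `ρ_A` and of `ρ_B` are then the row and the
column sums of the `2 × 2` array `q`, whose total is `Tr ρ = 1` and whose entries lie in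
`[λ₄, λ₁]`. A row sum plus a column sum equals `1 + qₘₙ - qₘ'ₙ'` (with `m' ≠ m`, `n' ≠ n`),
hence is at least `1 + λ₄ - λ₁ = λ₂ + λ₃ + 2λ₄`.
-/

lemma evals_eq_eigenvalues {n : Type*} [Fintype n] [DecidableEq n] {A : Matrix n n ℂ}
    (hA : A.IsHermitian) : evals A = hA.eigenvalues :=
  dif_pos hA

lemma sum_evals {n : Type*} [Fintype n] [DecidableEq n] {A : Matrix n n ℂ}
    (hA : A.IsHermitian) : ∑ i, evals A i = A.trace.re := by
  simp [evals_eq_eigenvalues hA, hA.trace_eq_sum_eigenvalues, Complex.re_sum]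

namespace Matrix

variable {n 𝕜 : Type*} [Fintype n] [DecidableEq n] [RCLike 𝕜]

lemma star_transpose_dotProduct_transpose_self (U : unitaryGroup n 𝕜) (i : n) :
    star ((U : Matrix n n 𝕜)ᵀ i) ⬝ᵥ (U : Matrix n n 𝕜)ᵀ i = 1 :=
  (congrFun (congrFun (mem_unitaryGroup_iff'.mp U.2) i) i).trans (one_apply_eq i)

lemma IsHermitian.conj_diagonal_sub_eq {A : Matrix n n 𝕜} (hA : A.IsHermitian) (c : ℝ) :
    (hA.eigenvectorUnitary : Matrix n n 𝕜) *
        diagonal (fun i => ((hA.eigenvalues i - c : ℝ) : 𝕜)) *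
        (hA.eigenvectorUnitary : Matrix n n 𝕜)ᴴ = A - (c : 𝕜) • 1 := by
  have hD : diagonal (fun i => ((hA.eigenvalues i - c : ℝ) : 𝕜)) =
      diagonal (RCLike.ofReal ∘ hA.eigenvalues) - (c : 𝕜) • 1 := by
    rw [smul_one_eq_diagonal, diagonal_sub]; simp
  rw [hD, mul_sub, sub_mul, Matrix.mul_smul, mul_one, Matrix.smul_mul, ← star_eq_conjTranspose,
    Unitary.mul_star_self_of_mem hA.eigenvectorUnitary.2]
  conv_rhs => rw [hA.spectral_theorem, Unitary.conjStarAlgAut_apply]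

lemma IsHermitian.le_re_dotProduct_mulVec {A : Matrix n n 𝕜} (hA : A.IsHermitian) {c : ℝ}
    (hc : ∀ i, c ≤ hA.eigenvalues i) {v : n → 𝕜} (hv : star v ⬝ᵥ v = 1) :
    c ≤ RCLike.re (star v ⬝ᵥ A *ᵥ v) := by
  have hpsd : (A - (c : 𝕜) • 1).PosSemidef := by
    rw [← hA.conj_diagonal_sub_eq]
    refine (PosSemidef.diagonal fun i => ?_).mul_mul_conjTranspose_same _
    simpa using hc i
  have := (RCLike.nonneg_iff.mp (hpsd.dotProduct_mulVec_nonneg v)).1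
  rw [sub_mulVec, dotProduct_sub, smul_mulVec, one_mulVec, dotProduct_smul, hv] at this
  simpa using this

lemma IsHermitian.re_dotProduct_mulVec_le {A : Matrix n n 𝕜} (hA : A.IsHermitian) {c : ℝ}
    (hc : ∀ i, hA.eigenvalues i ≤ c) {v : n → 𝕜} (hv : star v ⬝ᵥ v = 1) :
    RCLike.re (star v ⬝ᵥ A *ᵥ v) ≤ c := by
  have hpsd : ((c : 𝕜) • 1 - A).PosSemidef := by
    rw [← neg_sub, ← hA.conj_diagonal_sub_eq, ← neg_mul, ← mul_neg, diagonal_neg]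
    refine (PosSemidef.diagonal fun i => ?_).mul_mul_conjTranspose_same _
    simpa using hc i
  have := (RCLike.nonneg_iff.mp (hpsd.dotProduct_mulVec_nonneg v)).1
  rw [sub_mulVec, dotProduct_sub, smul_mulVec, one_mulVec, dotProduct_smul, hv] at this
  simpa using this

end Matrix

section KroneckerVec

variable {m n R : Type*}

def kroneckerVec [Mul R] (u : m → R) (w : n → R) : m × n → R :=
  fun p => u p.1 * w p.2

lemma kroneckerVec_comp_prodComm_symm [CommMagma R] (u : m → R) (w : n → R) :
    kroneckerVec w u ∘ (Equiv.prodComm n m).symm = kroneckerVec u w := by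
  ext p; exact mul_comm _ _

lemma star_kroneckerVec [CommMonoid R] [StarMul R] (u : m → R) (w : n → R) :
    star (kroneckerVec u w) = kroneckerVec (star u) (star w) := by
  ext p; simp [kroneckerVec]

lemma kroneckerVec_dotProduct_kroneckerVec [Fintype m] [Fintype n] [CommSemiring R]
    (u u' : m → R) (w w' : n → R) :
    kroneckerVec u w ⬝ᵥ kroneckerVec u' w' = (u ⬝ᵥ u') * (w ⬝ᵥ w') := by
  simp only [dotProduct, kroneckerVec, Fintype.sum_prod_type, Finset.sum_mul_sum]
  exact Finset.sum_congr rfl fun _ _ => Finset.sum_congr rfl fun _ _ => by ring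

lemma star_kroneckerVec_dotProduct_self [Fintype m] [Fintype n] [CommSemiring R] [StarRing R]
    {u : m → R} {w : n → R} (hu : star u ⬝ᵥ u = 1) (hw : star w ⬝ᵥ w = 1) :
    star (kroneckerVec u w) ⬝ᵥ kroneckerVec u w = 1 := by
  rw [star_kroneckerVec, kroneckerVec_dotProduct_kroneckerVec, hu, hw, one_mul]

end KroneckerVec

section PartialTrace

variable {a b : ℕ}

lemma ptraceA_eq_ptraceB_submatrix (ρ : Matrix (Fin a × Fin b) (Fin a × Fin b) ℂ) :
    ptraceA ρ = ptraceB (ρ.submatrix Prod.swap Prod.swap) := rfl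

lemma isHermitian_ptraceB {ρ : Matrix (Fin a × Fin b) (Fin a × Fin b) ℂ}
    (hρ : ρ.IsHermitian) : (ptraceB ρ).IsHermitian := by
  ext i j
  simp only [conjTranspose_apply, ptraceB, star_sum]
  exact Finset.sum_congr rfl fun k _ => hρ.apply (i, k) (j, k)

lemma isHermitian_ptraceA {ρ : Matrix (Fin a × Fin b) (Fin a × Fin b) ℂ}
    (hρ : ρ.IsHermitian) : (ptraceA ρ).IsHermitian :=
  isHermitian_ptraceB (hρ.submatrix Prod.swap)

lemma trace_ptraceB (ρ : Matrix (Fin a × Fin b) (Fin a × Fin b) ℂ) :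
    (ptraceB ρ).trace = ρ.trace := by
  simp [trace, ptraceB, Fintype.sum_prod_type]

lemma sum_dotProduct_mulVec_kroneckerVec_right (ρ : Matrix (Fin a × Fin b) (Fin a × Fin b) ℂ)
    (u : Fin a → ℂ) (W : unitaryGroup (Fin b) ℂ) :
    ∑ n, star (kroneckerVec u ((W : Matrix (Fin b) (Fin b) ℂ)ᵀ n)) ⬝ᵥ
        ρ *ᵥ kroneckerVec u ((W : Matrix (Fin b) (Fin b) ℂ)ᵀ n) =
      star u ⬝ᵥ ptraceB ρ *ᵥ u := by
  have hW : ∀ k l, ∑ n, star (W k n) * W l n = if l = k then 1 else 0 := fun k l => by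
    simpa [mul_apply, one_apply, mul_comm] using
      congrFun (congrFun (mem_unitaryGroup_iff.mp W.2) l) k
  have hn : ∀ i k j l, ∑ n, star (u i * W k n) * (ρ (i, k) (j, l) * (u j * W l n)) =
      if l = k then star (u i) * ρ (i, k) (j, l) * u j else 0 := fun i k j l => by
    rw [← mul_boole, ← hW, Finset.mul_sum]
    exact Finset.sum_congr rfl fun n _ => by rw [star_mul']; ring
  simp only [dotProduct, mulVec, kroneckerVec, ptraceB, Fintype.sum_prod_type,
    Finset.mul_sum, Pi.star_apply, transpose_apply]
  calc _ = ∑ i, ∑ k, ∑ j, ∑ l, ∑ n, star (u i * W k n) * (ρ (i, k) (j, l) * (u j * W l n)) := by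
        rw [Finset.sum_comm]; refine Finset.sum_congr rfl fun i _ => ?_
        rw [Finset.sum_comm]; refine Finset.sum_congr rfl fun k _ => ?_
        rw [Finset.sum_comm]; refine Finset.sum_congr rfl fun j _ => ?_
        rw [Finset.sum_comm]
    _ = ∑ i, ∑ k, ∑ j, star (u i) * ρ (i, k) (j, k) * u j := by
        simp only [hn, Finset.sum_ite_eq', Finset.mem_univ, if_true]
    _ = _ := by
        simp only [Finset.sum_mul, Finset.mul_sum]
        refine Finset.sum_congr rfl fun i _ => ?_
        rw [Finset.sum_comm]
        simp only [mul_assoc]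

lemma sum_dotProduct_mulVec_kroneckerVec_left (ρ : Matrix (Fin a × Fin b) (Fin a × Fin b) ℂ)
    (U : unitaryGroup (Fin a) ℂ) (w : Fin b → ℂ) :
    ∑ m, star (kroneckerVec ((U : Matrix (Fin a) (Fin a) ℂ)ᵀ m) w) ⬝ᵥ
        ρ *ᵥ kroneckerVec ((U : Matrix (Fin a) (Fin a) ℂ)ᵀ m) w =
      star w ⬝ᵥ ptraceA ρ *ᵥ w := by
  rw [ptraceA_eq_ptraceB_submatrix, ← sum_dotProduct_mulVec_kroneckerVec_right _ _ U]
  refine Finset.sum_congr rfl fun m _ => ?_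
  rw [show (Prod.swap : Fin b × Fin a → _) = Equiv.prodComm _ _ from rfl, submatrix_mulVec_equiv,
    ← comp_equiv_symm_dotProduct, ← kroneckerVec_comp_prodComm_symm _ w]
  rfl

lemma evals_ptraceB_eq_sum {ρ : Matrix (Fin a × Fin b) (Fin a × Fin b) ℂ}
    (hA : (ptraceB ρ).IsHermitian) (W : unitaryGroup (Fin b) ℂ) (m : Fin a) :
    evals (ptraceB ρ) m =
      ∑ n, (star (kroneckerVec ((hA.eigenvectorUnitary : Matrix (Fin a) (Fin a) ℂ)ᵀ m)
        ((W : Matrix (Fin b) (Fin b) ℂ)ᵀ n)) ⬝ᵥ ρ *ᵥ kroneckerVec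
          ((hA.eigenvectorUnitary : Matrix (Fin a) (Fin a) ℂ)ᵀ m)
          ((W : Matrix (Fin b) (Fin b) ℂ)ᵀ n)).re := by
  rw [evals_eq_eigenvalues hA, hA.eigenvalues_eq, ← IsHermitian.eigenvectorUnitary_transpose_apply,
    ← sum_dotProduct_mulVec_kroneckerVec_right _ _ W, map_sum]
  rfl

lemma evals_ptraceA_eq_sum {ρ : Matrix (Fin a × Fin b) (Fin a × Fin b) ℂ}
    (hB : (ptraceA ρ).IsHermitian) (U : unitaryGroup (Fin a) ℂ) (n : Fin b) :
    evals (ptraceA ρ) n =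
      ∑ m, (star (kroneckerVec ((U : Matrix (Fin a) (Fin a) ℂ)ᵀ m)
        ((hB.eigenvectorUnitary : Matrix (Fin b) (Fin b) ℂ)ᵀ n)) ⬝ᵥ ρ *ᵥ kroneckerVec
          ((U : Matrix (Fin a) (Fin a) ℂ)ᵀ m)
          ((hB.eigenvectorUnitary : Matrix (Fin b) (Fin b) ℂ)ᵀ n)).re := by
  rw [evals_eq_eigenvalues hB, hB.eigenvalues_eq, ← IsHermitian.eigenvectorUnitary_transpose_apply,
    ← sum_dotProduct_mulVec_kroneckerVec_left _ U, map_sum]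
  rfl

end PartialTrace

section SortDesc

variable {d : ℕ}

lemma sortDesc_antitone (p : Fin d → ℝ) : Antitone (sortDesc p) :=
  (Tuple.monotone_sort p).comp_antitone Fin.rev_anti

lemma exists_sortDesc_eq (p : Fin d → ℝ) (j : Fin d) : ∃ i, sortDesc p i = p j :=
  ⟨Fin.rev ((Tuple.sort p).symm j), by simp [sortDesc]⟩

lemma sum_sortDesc (p : Fin d → ℝ) : ∑ i, sortDesc p i = ∑ i, p i :=
  (Equiv.sum_comp Fin.revPerm (p ∘ Tuple.sort p)).trans (Equiv.sum_comp (Tuple.sort p) p)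

lemma sortDesc_last_le (p : Fin (d + 1) → ℝ) (j : Fin (d + 1)) :
    sortDesc p (Fin.last d) ≤ p j := by
  obtain ⟨i, hi⟩ := exists_sortDesc_eq p j
  exact hi ▸ sortDesc_antitone p (Fin.le_last i)

lemma le_sortDesc_zero (p : Fin (d + 1) → ℝ) (j : Fin (d + 1)) :
    p j ≤ sortDesc p 0 := by
  obtain ⟨i, hi⟩ := exists_sortDesc_eq p j
  exact hi ▸ sortDesc_antitone p (Fin.zero_le i)

end SortDesc

lemma evalsP_finProdFinEquiv {a b : ℕ} {ρ : Matrix (Fin a × Fin b) (Fin a × Fin b) ℂ}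
    (hρ : ρ.IsHermitian) (x : Fin a × Fin b) :
    evalsP ρ (finProdFinEquiv x) = hρ.eigenvalues x := by
  simp [evalsP, evals_eq_eigenvalues hρ]

lemma sum_evalsP {a b : ℕ} {ρ : Matrix (Fin a × Fin b) (Fin a × Fin b) ℂ} (hρ : ρ.IsHermitian) :
    ∑ i, evalsP ρ i = ρ.trace.re := by
  rw [← sum_evals hρ, ← Equiv.sum_comp finProdFinEquiv.symm]
  rfl

/-- A row and a column of a `2 × 2` array together cover every entry once, except one entry
covered twice and the opposite one not at all. -/
lemma total_add_sub_le_min_add_min {q : Fin 2 → Fin 2 → ℝ} {lo hi : ℝ}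
    (hlo : ∀ m n, lo ≤ q m n) (hhi : ∀ m n, q m n ≤ hi) :
    ∑ m, ∑ n, q m n + lo - hi ≤
      min (∑ n, q 0 n) (∑ n, q 1 n) + min (∑ m, q m 0) (∑ m, q m 1) := by
  simp only [Fin.sum_univ_two]
  rcases min_choice (q 0 0 + q 0 1) (q 1 0 + q 1 1) with hA | hA <;>
    rcases min_choice (q 0 0 + q 1 0) (q 0 1 + q 1 1) with hB | hB <;>
    rw [hA, hB] <;>
    linarith [hlo 0 0, hlo 0 1, hlo 1 0, hlo 1 1, hhi 0 0, hhi 0 1, hhi 1 0, hhi 1 1]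

theorem stmt_9 (ρ : Matrix (Fin 2 × Fin 2) (Fin 2 × Fin 2) ℂ)
    (hρ : ρ.PosSemidef) (hρ1 : ρ.trace = 1) :
    min (evals (ptraceB ρ) 0) (evals (ptraceB ρ) 1) +
      min (evals (ptraceA ρ) 0) (evals (ptraceA ρ) 1) ≥
      sortDesc (evalsP ρ) ⟨1, by norm_num⟩ + sortDesc (evalsP ρ) ⟨2, by norm_num⟩ +
        2 * sortDesc (evalsP ρ) ⟨3, by norm_num⟩ := by
  have hH := hρ.isHermitian
  have hA := isHermitian_ptraceB hH
  have hB := isHermitian_ptraceA hH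
  set U : Matrix (Fin 2) (Fin 2) ℂ := ↑hA.eigenvectorUnitary
  set W : Matrix (Fin 2) (Fin 2) ℂ := ↑hB.eigenvectorUnitary
  set q : Fin 2 → Fin 2 → ℝ := fun m n =>
    (star (kroneckerVec (Uᵀ m) (Wᵀ n)) ⬝ᵥ ρ *ᵥ kroneckerVec (Uᵀ m) (Wᵀ n)).re
  have hqA : ∀ m, evals (ptraceB ρ) m = ∑ n, q m n := evals_ptraceB_eq_sum hA hB.eigenvectorUnitary
  have hqB : ∀ n, evals (ptraceA ρ) n = ∑ m, q m n := evals_ptraceA_eq_sum hB hA.eigenvectorUnitary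
  have htot : ∑ m, ∑ n, q m n = 1 := by
    simp_rw [← hqA, sum_evals hA, trace_ptraceB, hρ1, Complex.one_re]
  have hunit : ∀ m n, star (kroneckerVec (Uᵀ m) (Wᵀ n)) ⬝ᵥ kroneckerVec (Uᵀ m) (Wᵀ n) = 1 :=
    fun m n => star_kroneckerVec_dotProduct_self
      (star_transpose_dotProduct_transpose_self hA.eigenvectorUnitary m)
      (star_transpose_dotProduct_transpose_self hB.eigenvectorUnitary n)
  have hlo : ∀ m n, sortDesc (evalsP ρ) ⟨3, by norm_num⟩ ≤ q m n := fun m n =>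
    hH.le_re_dotProduct_mulVec
      (fun x => evalsP_finProdFinEquiv hH x ▸ sortDesc_last_le (d := 3) _ _)
      (hunit m n)
  have hhi : ∀ m n, q m n ≤ sortDesc (evalsP ρ) ⟨0, by norm_num⟩ := fun m n =>
    hH.re_dotProduct_mulVec_le
      (fun x => evalsP_finProdFinEquiv hH x ▸ le_sortDesc_zero (d := 3) _ _)
      (hunit m n)
  have hsum : sortDesc (evalsP ρ) ⟨0, by norm_num⟩ + sortDesc (evalsP ρ) ⟨1, by norm_num⟩ +
      sortDesc (evalsP ρ) ⟨2, by norm_num⟩ + sortDesc (evalsP ρ) ⟨3, by norm_num⟩ = 1 := by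
    calc _ = ∑ i, sortDesc (evalsP ρ) i := (Fin.sum_univ_four _).symm
      _ = 1 := by rw [sum_sortDesc, sum_evalsP hH, hρ1, Complex.one_re]
  have key := total_add_sub_le_min_add_min hlo hhi
  simp only [hqA, hqB, htot] at key ⊢
  linarith
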